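/- arXiv:2601.03131 — 5 statements merged into one kernel-verified Lean document; each statement's English description precedes it below -/
import Mathlib

section
/- Let X be a Banach space and N ⊂ X an (ε,δ)-net. Then there exists C = 2 + 4ε/δ such that for every closed ball B in X with B ∩ N nonempty, there is a C-Lipschitz retraction φ : N → B ∩ N. -/
section aux
variable {X : Type*} [NormedAddCommGroup X] [NormedSpace ℝ X]

lemma smul_min_eq_self (r : ℝ) (b : X) (hb : ‖b‖ ≤ r) :
    min 1 (r / ‖b‖) • b = b := by
  rcases eq_or_ne b 0 with rfl | hb0
  · simp
  · have hbn : 0 < ‖b‖ := norm_pos_iff.mpr hb0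
    rw [min_eq_left (by rw [le_div_iff₀ hbn]; linarith), one_smul]

lemma norm_smul_min_le (r : ℝ) (hr : 0 ≤ r) (b : X) :
    ‖min 1 (r / ‖b‖) • b‖ ≤ r := by
  rcases eq_or_ne b 0 with rfl | hb0
  · simpa using hr
  · have hbn : 0 < ‖b‖ := norm_pos_iff.mpr hb0
    rcases le_total ‖b‖ r with h | h
    · rw [smul_min_eq_self r b h]; exact h
    · rw [min_eq_right (by rw [div_le_one hbn]; exact h), norm_smul]
      rw [Real.norm_of_nonneg (div_nonneg hr hbn.le)]
      field_simp
      exact le_rfl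

lemma norm_sub_smul_min_le (r c : ℝ) (hc : 0 ≤ c) (b : X) (hb : ‖b‖ ≤ r + c) :
    ‖b - min 1 (r / ‖b‖) • b‖ ≤ c := by
  rcases eq_or_ne b 0 with rfl | hb0
  · simpa using hc
  · have hbn : 0 < ‖b‖ := norm_pos_iff.mpr hb0
    rcases le_total ‖b‖ r with h | h
    · rw [smul_min_eq_self r b h, sub_self, norm_zero]; exact hc
    · rw [min_eq_right (by rw [div_le_one hbn]; exact h)]
      have key : b - (r / ‖b‖) • b = (1 - r / ‖b‖) • b := by
        rw [sub_smul, one_smul]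
      rw [key, norm_smul, Real.norm_of_nonneg (by rw [sub_nonneg, div_le_one hbn]; exact h)]
      have h2 : r / ‖b‖ * ‖b‖ = r := by field_simp
      nlinarith

lemma radial_lip (r : ℝ) (hr : 0 ≤ r) (a b : X) :
    ‖min 1 (r / ‖a‖) • a - min 1 (r / ‖b‖) • b‖ ≤ 2 * ‖a - b‖ := by
  wlog h : ‖b‖ ≤ ‖a‖ generalizing a b
  · have := this b a (le_of_not_ge h)
    rw [norm_sub_rev] at this
    rw [norm_sub_rev a b]
    exact this
  rcases eq_or_ne a 0 with rfl | ha0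
  · have : b = 0 := norm_le_zero_iff.mp (by simpa using h)
    simp [this]
  have han : 0 < ‖a‖ := norm_pos_iff.mpr ha0
  have hanb : ‖a‖ - ‖b‖ ≤ ‖a - b‖ := norm_sub_norm_le a b
  rcases eq_or_ne b 0 with rfl | hb0
  · have hm0 : (0:ℝ) ≤ min 1 (r / ‖a‖) := le_min zero_le_one (div_nonneg hr han.le)
    have hm1 : min 1 (r / ‖a‖) ≤ 1 := min_le_left _ _
    simp only [smul_zero, sub_zero]
    rw [norm_smul, Real.norm_of_nonneg hm0]
    nlinarith [norm_nonneg a]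
  have hbn : 0 < ‖b‖ := norm_pos_iff.mpr hb0
  rcases le_total ‖a‖ r with h1 | h1
  · rw [smul_min_eq_self r a h1, smul_min_eq_self r b (h.trans h1)]
    nlinarith [norm_nonneg (a - b)]
  · rw [min_eq_right (by rw [div_le_one han]; exact h1)]
    set t := r / ‖a‖ with ht
    have ht0 : 0 ≤ t := div_nonneg hr han.le
    have ht1 : t ≤ 1 := by rw [ht, div_le_one han]; exact h1
    have hta : t * ‖a‖ = r := by rw [ht]; field_simp
    rcases le_total ‖b‖ r with h2 | h2
    · rw [smul_min_eq_self r b h2]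
      have key : t • a - b = t • (a - b) + (t • b - b) := by rw [smul_sub]; abel
      calc ‖t • a - b‖ ≤ ‖t • (a - b)‖ + ‖t • b - b‖ := by rw [key]; exact norm_add_le _ _
        _ = t * ‖a - b‖ + (1 - t) * ‖b‖ := by
            rw [norm_smul, Real.norm_of_nonneg ht0]
            congr 1
            have : t • b - b = -((1 - t) • b) := by rw [sub_smul, one_smul]; abel
            rw [this, norm_neg, norm_smul, Real.norm_of_nonneg (by linarith)]
        _ ≤ 2 * ‖a - b‖ := by nlinarith
    · rw [min_eq_right (by rw [div_le_one hbn]; exact h2)]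
      set s := r / ‖b‖ with hs
      have hs0 : 0 ≤ s := div_nonneg hr hbn.le
      have hs1 : s ≤ 1 := by rw [hs, div_le_one hbn]; exact h2
      have hsb : s * ‖b‖ = r := by rw [hs]; field_simp
      have hts : t ≤ s := by
        rw [ht, hs]; exact div_le_div_of_nonneg_left hr hbn h
      have key : t • a - s • b = s • (a - b) + (t - s) • a := by
        rw [smul_sub, sub_smul]; abel
      calc ‖t • a - s • b‖ ≤ ‖s • (a - b)‖ + ‖(t - s) • a‖ := by
            rw [key]; exact norm_add_le _ _
        _ = s * ‖a - b‖ + (s - t) * ‖a‖ := by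
            rw [norm_smul, Real.norm_of_nonneg hs0, norm_smul,
              Real.norm_of_nonpos (by linarith)]
            ring_nf
        _ ≤ 2 * ‖a - b‖ := by nlinarith
end aux

/-- If `N` is an `(ε,δ)`-net in a Banach space `X`, then with `C = 2 + 4ε/δ`,
for every closed ball `B` in `X` meeting `N` there is a `C`-Lipschitz retraction
of `N` onto `B ∩ N`. -/
theorem net_ball_retract {X : Type*} [NormedAddCommGroup X]
    [NormedSpace ℝ X] [CompleteSpace X]
    (N : Set X) (ε δ : ℝ) (hε : 0 < ε) (hδ : 0 < δ)
    (hdense : ∀ x : X, ∃ y ∈ N, ‖x - y‖ ≤ ε)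
    (hsep : ∀ y ∈ N, ∀ y' ∈ N, y ≠ y' → δ ≤ ‖y - y'‖) :
    ∀ (p : X) (R : ℝ), 0 < R → (Metric.closedBall p R ∩ N).Nonempty →
      ∃ φ : X → X,
        (∀ x ∈ N, φ x ∈ Metric.closedBall p R ∩ N) ∧
        (∀ x ∈ Metric.closedBall p R ∩ N, φ x = x) ∧
        (∀ x ∈ N, ∀ y ∈ N, ‖φ x - φ y‖ ≤ (2 + 4 * ε / δ) * ‖x - y‖) := by
  classical
  intro p R hR hne
  have hC2 : (0:ℝ) ≤ 4 * ε / δ := by positivity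
  rcases lt_or_ge R ε with hRe | hRe
  · -- small ball: send everything outside B to a fixed point of B ∩ N
    obtain ⟨z₀, hz₀⟩ := hne
    refine ⟨fun x => if x ∈ Metric.closedBall p R then x else z₀, ?_, ?_, ?_⟩
    · intro x hx
      by_cases hxB : x ∈ Metric.closedBall p R
      · simp only [if_pos hxB]; exact ⟨hxB, hx⟩
      · simpa [hxB] using hz₀
    · intro x hx; simp [hx.1]
    · intro x hx y hy
      by_cases hxB : x ∈ Metric.closedBall p R <;> by_cases hyB : y ∈ Metric.closedBall p R <;>
        simp only [hxB, hyB, if_true, if_false, ite_true, ite_false]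
      · nlinarith [norm_nonneg (x - y)]
      · -- x ∈ B, y ∉ B, so x ≠ y and ‖x - y‖ ≥ δ
        have hxy : x ≠ y := by rintro rfl; exact hyB hxB
        have hd : δ ≤ ‖x - y‖ := hsep x hx y hy hxy
        have h1 : ‖x - z₀‖ ≤ 2 * R := by
          have hx' : dist x p ≤ R := Metric.mem_closedBall.mp hxB
          have hz' : dist z₀ p ≤ R := Metric.mem_closedBall.mp hz₀.1
          calc ‖x - z₀‖ = dist x z₀ := (dist_eq_norm x z₀).symm
            _ ≤ dist x p + dist p z₀ := dist_triangle _ _ _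
            _ ≤ R + R := by rw [dist_comm p z₀]; linarith
            _ = 2 * R := by ring
        have h2 : 4 * ε / δ * δ = 4 * ε := by field_simp
        nlinarith [norm_nonneg (x - y)]
      · have hxy : y ≠ x := by rintro rfl; exact hxB hyB
        have hd : δ ≤ ‖y - x‖ := hsep y hy x hx hxy
        have hd' : δ ≤ ‖x - y‖ := by rwa [norm_sub_rev]
        have h1 : ‖z₀ - y‖ ≤ 2 * R := by
          have hy' : dist y p ≤ R := Metric.mem_closedBall.mp hyB
          have hz' : dist z₀ p ≤ R := Metric.mem_closedBall.mp hz₀.1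
          calc ‖z₀ - y‖ = dist z₀ y := (dist_eq_norm _ _).symm
            _ ≤ dist z₀ p + dist p y := dist_triangle _ _ _
            _ ≤ R + R := by rw [dist_comm p y]; linarith
            _ = 2 * R := by ring
        have h2 : 4 * ε / δ * δ = 4 * ε := by field_simp
        nlinarith [norm_nonneg (x - y)]
      · simp; positivity
  · -- big ball: radial retraction to radius r = R - ε, then snap to the net
    set r := R - ε with hrdef
    have hr0 : 0 ≤ r := by linarith
    -- radial retraction onto closedBall p r
    set ρ : X → X := fun x => p + min 1 (r / ‖x - p‖) • (x - p) with hρ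
    have hρball : ∀ x, ‖ρ x - p‖ ≤ r := by
      intro x
      simp only [hρ, add_sub_cancel_left]
      exact norm_smul_min_le r hr0 (x - p)
    have hρlip : ∀ x y, ‖ρ x - ρ y‖ ≤ 2 * ‖x - y‖ := by
      intro x y
      have : ρ x - ρ y = min 1 (r / ‖x - p‖) • (x - p) - min 1 (r / ‖y - p‖) • (y - p) := by
        simp only [hρ]; abel
      rw [this]
      have := radial_lip r hr0 (x - p) (y - p)
      simpa using this
    have hρnear : ∀ x, ‖x - p‖ ≤ R → ‖x - ρ x‖ ≤ ε := by
      intro x hx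
      have : x - ρ x = (x - p) - min 1 (r / ‖x - p‖) • (x - p) := by
        simp only [hρ]; abel
      rw [this]
      exact norm_sub_smul_min_le r ε hε.le (x - p) (by linarith)
    -- define φ
    choose g hgN hgdist using fun x => hdense (ρ x)
    set φ : X → X := fun x => if x ∈ Metric.closedBall p R then x else g x with hφ
    have hφnear : ∀ x ∈ N, ‖φ x - ρ x‖ ≤ ε := by
      intro x hx
      by_cases hxB : x ∈ Metric.closedBall p R
      · simp only [hφ, if_pos hxB]
        have : ‖x - p‖ ≤ R := by
          have := Metric.mem_closedBall.mp hxB; rwa [dist_eq_norm] at this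
        exact hρnear x this
      · simp only [hφ, if_neg hxB]
        rw [norm_sub_rev]
        exact hgdist x
    have hφmem : ∀ x ∈ N, φ x ∈ Metric.closedBall p R ∩ N := by
      intro x hx
      by_cases hxB : x ∈ Metric.closedBall p R
      · simp only [hφ, if_pos hxB]; exact ⟨hxB, hx⟩
      · simp only [hφ, if_neg hxB]
        refine ⟨?_, hgN x⟩
        rw [Metric.mem_closedBall, dist_eq_norm]
        calc ‖g x - p‖ ≤ ‖g x - ρ x‖ + ‖ρ x - p‖ := norm_sub_le_norm_sub_add_norm_sub _ _ _
          _ ≤ ε + r := by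
              have := hgdist x; rw [norm_sub_rev] at this
              exact add_le_add this (hρball x)
          _ = R := by rw [hrdef]; ring
    refine ⟨φ, hφmem, ?_, ?_⟩
    · intro x hx; simp only [hφ, if_pos hx.1]
    · intro x hx y hy
      rcases eq_or_ne x y with rfl | hxy
      · simp
      · have hd : δ ≤ ‖x - y‖ := hsep x hx y hy hxy
        have h1 : ‖φ x - φ y‖ ≤ ‖φ x - ρ x‖ + ‖ρ x - ρ y‖ + ‖ρ y - φ y‖ := by
          calc ‖φ x - φ y‖ ≤ ‖φ x - ρ x‖ + ‖ρ x - φ y‖ := norm_sub_le_norm_sub_add_norm_sub _ _ _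
            _ ≤ ‖φ x - ρ x‖ + (‖ρ x - ρ y‖ + ‖ρ y - φ y‖) :=
                add_le_add_right (norm_sub_le_norm_sub_add_norm_sub _ _ _) _
            _ = _ := by ring
        have h2 := hφnear x hx
        have h3 := hφnear y hy
        have h3' : ‖ρ y - φ y‖ ≤ ε := by rwa [norm_sub_rev]
        have h4 := hρlip x y
        have h5 : 4 * ε / δ * δ = 4 * ε := by field_simp
        nlinarith [norm_nonneg (x - y)]
end

section
/- Let I ⊆ ℕ, let P_I : ℓ¹ → ℓ¹(I) be the coordinate projection, and define r_I(x) = max{1 - ‖x - P_I x‖/‖P_I x‖, 0} (with r_I(x) = 0 when P_I x = 0) and R_I(x) = r_I(x)·P_I x. Then R_I is a 2-Lipschitz retraction of ℓ¹ onto ℓ¹(I), and R_I(x) = 0 whenever ‖x - P_I x‖ ≥ ‖P_I x‖. -/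
open Classical ENNReal

set_option maxHeartbeats 1000000 in
private lemma key_scalar_cone (α β u v : ℝ) (hα : 0 ≤ α) (hβ : 0 ≤ β) (hu : 0 ≤ u) (hv : 0 ≤ v) :
    |max (1 - u/α) 0 - max (1 - v/β) 0| * β ≤ |u - v| + |α - β| := by
  have habs1 : v - u ≤ |u - v| := by rw [abs_sub_comm]; exact le_abs_self _
  have habs2 : u - v ≤ |u - v| := le_abs_self _
  have habs3 : α - β ≤ |α - β| := le_abs_self _
  have habs4 : β - α ≤ |α - β| := by rw [abs_sub_comm]; exact le_abs_self _
  rcases eq_or_lt_of_le hβ with hβ0 | hβ0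
  · rw [← hβ0, mul_zero]; positivity
  rcases eq_or_lt_of_le hα with hα0 | hα0
  · rw [← hα0] at habs3 habs4 ⊢
    have h1 : max (1 - u/0) 0 = 1 := by norm_num
    rw [h1]
    have ht0 : 0 ≤ max (1 - v/β) 0 := le_max_right _ _
    have ht1 : max (1 - v/β) 0 ≤ 1 := by
      apply max_le _ zero_le_one
      have : 0 ≤ v / β := by positivity
      linarith
    have : |1 - max (1 - v/β) 0| ≤ 1 := by rw [abs_le]; constructor <;> linarith
    nlinarith [abs_nonneg (u - v)]
  · have hua : u / α * α = u := div_mul_cancel₀ u hα0.ne'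
    have hvb : v / β * β = v := div_mul_cancel₀ v hβ0.ne'
    have hda : 0 ≤ u / α := by positivity
    have hdb : 0 ≤ v / β := by positivity
    set s := u / α with hsdef
    set t := v / β with htdef
    rcases le_total (1 - s) 0 with hs | hs <;> rcases le_total (1 - t) 0 with ht | ht
    · rw [max_eq_right hs, max_eq_right ht]; simp; positivity
    · rw [max_eq_right hs, max_eq_left ht]
      have huα : α ≤ u := by nlinarith
      have hvβ : v ≤ β := by nlinarith
      rw [zero_sub, abs_neg, abs_of_nonneg ht, sub_mul, one_mul, hvb]
      linarith
    · rw [max_eq_left hs, max_eq_right ht]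
      have huα : u ≤ α := by nlinarith
      have hvβ : β ≤ v := by nlinarith
      rw [sub_zero, abs_of_nonneg hs]
      have key : (1 - s) * β * α ≤ (|u - v| + |α - β|) * α := by
        have hsβα : s * β * α = u * β := by rw [mul_right_comm, hua]
        rcases le_total β α with hba | hba
        · nlinarith [mul_nonneg (sub_nonneg.2 huα) (sub_nonneg.2 hba)]
        · nlinarith [mul_nonneg (sub_nonneg.2 hvβ) hα, mul_nonneg (sub_nonneg.2 hba) hu]
      exact le_of_mul_le_mul_right (by linarith) hα0
    · have huα : u ≤ α := by nlinarith
      have hvβ : v ≤ β := by nlinarith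
      rw [max_eq_left hs, max_eq_left ht]
      have hexp : (1 - s) - (1 - t) = t - s := by ring
      rw [hexp]
      have hsβα : s * β * α = u * β := by rw [mul_right_comm, hua]
      have htβ : t * β = v := hvb
      rcases abs_cases (t - s) with ⟨heq, _⟩ | ⟨heq, _⟩ <;> rw [heq]
      · have key : (t - s) * β * α ≤ (|u - v| + |α - β|) * α := by
          have h1 : (t - s) * β * α = v * α - u * β := by
            rw [sub_mul, sub_mul, htβ, hsβα]
          rw [h1]
          rcases le_total β α with hba | hba
          · nlinarith [mul_nonneg (sub_nonneg.2 huα) (sub_nonneg.2 hba)]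
          · nlinarith [mul_nonneg (sub_nonneg.2 hba) hu, mul_nonneg (sub_nonneg.2 hba) hα]
        exact le_of_mul_le_mul_right (by linarith) hα0
      · have key : (-(t - s)) * β * α ≤ (|u - v| + |α - β|) * α := by
          have h1 : (-(t - s)) * β * α = u * β - v * α := by
            rw [neg_sub, sub_mul, sub_mul, htβ, hsβα]
          rw [h1]
          rcases le_total β α with hba | hba
          · nlinarith [mul_nonneg hu (sub_nonneg.2 hba)]
          · nlinarith [mul_nonneg (sub_nonneg.2 huα) (sub_nonneg.2 hba)]
        exact le_of_mul_le_mul_right (by linarith) hα0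

section ConeHelpers
variable (I : Set ℕ) (P : lp (fun _ : ℕ => ℝ) 1 → lp (fun _ : ℕ => ℝ) 1)
  (hP : ∀ (x : lp (fun _ : ℕ => ℝ) 1) (n : ℕ), P x n = if n ∈ I then x n else 0)

include hP

private lemma cone_P_sub (x y : lp (fun _ : ℕ => ℝ) 1) : P x - P y = P (x - y) := by
  apply lp.ext
  funext n
  simp only [lp.coeFn_sub, Pi.sub_apply, hP]
  split <;> simp

private lemma cone_norm_split (z : lp (fun _ : ℕ => ℝ) 1) : ‖P z‖ + ‖z - P z‖ = ‖z‖ := by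
  have hp : (0:ℝ) < (1 : ℝ≥0∞).toReal := by simp
  have h1 := lp.hasSum_norm hp (P z)
  have h2 := lp.hasSum_norm hp (z - P z)
  have h3 := lp.hasSum_norm hp z
  simp only [ENNReal.toReal_one, Real.rpow_one] at h1 h2 h3
  refine (h1.add h2).unique ?_
  convert h3 using 2 with n
  simp only [lp.coeFn_sub, Pi.sub_apply, hP]
  by_cases hn : n ∈ I <;> simp [hn, abs_of_nonneg, Real.norm_eq_abs]

end ConeHelpers

open Classical in
/-- With `P_I` the coordinate projection of `ℓ¹` onto `ℓ¹(I)`, the map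
`R_I x = max{1 - ‖x - P_I x‖/‖P_I x‖, 0} • P_I x` is a 2-Lipschitz retraction of
`ℓ¹` onto `ℓ¹(I)` which vanishes whenever `‖x - P_I x‖ ≥ ‖P_I x‖`.
(With real division-by-zero conventions, the case `P_I x = 0` needs no special
treatment, since then `R_I x = 0` automatically.) -/
theorem cone_retraction_l1 (I : Set ℕ)
    (P : lp (fun _ : ℕ => ℝ) 1 → lp (fun _ : ℕ => ℝ) 1)
    (hP : ∀ (x : lp (fun _ : ℕ => ℝ) 1) (n : ℕ), P x n = if n ∈ I then x n else 0)
    (R : lp (fun _ : ℕ => ℝ) 1 → lp (fun _ : ℕ => ℝ) 1)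
    (hR : ∀ x : lp (fun _ : ℕ => ℝ) 1, R x = max (1 - ‖x - P x‖ / ‖P x‖) 0 • P x) :
    (∀ x y : lp (fun _ : ℕ => ℝ) 1, ‖R x - R y‖ ≤ 2 * ‖x - y‖) ∧
    (∀ (x : lp (fun _ : ℕ => ℝ) 1) (n : ℕ), n ∉ I → R x n = 0) ∧
    (∀ x : lp (fun _ : ℕ => ℝ) 1, (∀ n ∉ I, x n = 0) → R x = x) ∧
    (∀ x : lp (fun _ : ℕ => ℝ) 1, ‖P x‖ ≤ ‖x - P x‖ → R x = 0) := by
  refine ⟨?_, ?_, ?_, ?_⟩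
  · -- 2-Lipschitz
    intro x y
    set s := max (1 - ‖x - P x‖ / ‖P x‖) 0 with hs
    set t := max (1 - ‖y - P y‖ / ‖P y‖) 0 with ht
    have hs0 : 0 ≤ s := le_max_right _ _
    have hs1 : s ≤ 1 := by
      apply max_le _ zero_le_one
      have : 0 ≤ ‖x - P x‖ / ‖P x‖ := by positivity
      linarith
    have hsub : R x - R y = s • (P x - P y) + (s - t) • P y := by
      rw [hR x, hR y, smul_sub, sub_smul]; abel
    have hPsub : P x - P y = P (x - y) := cone_P_sub I P hP x y
    have hsplit : ‖P (x - y)‖ + ‖x - y - P (x - y)‖ = ‖x - y‖ := cone_norm_split I P hP _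
    have hkey : |s - t| * ‖P y‖ ≤ |‖x - P x‖ - ‖y - P y‖| + |‖P x‖ - ‖P y‖| :=
      key_scalar_cone ‖P x‖ ‖P y‖ ‖x - P x‖ ‖y - P y‖ (norm_nonneg _) (norm_nonneg _)
        (norm_nonneg _) (norm_nonneg _)
    have hdiff : x - P x - (y - P y) = x - y - P (x - y) := by
      rw [← hPsub]; abel
    have h1 : |‖x - P x‖ - ‖y - P y‖| ≤ ‖x - y - P (x - y)‖ := by
      rw [← hdiff]; exact abs_norm_sub_norm_le _ _
    have h2 : |‖P x‖ - ‖P y‖| ≤ ‖P (x - y)‖ := by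
      rw [← hPsub]; exact abs_norm_sub_norm_le _ _
    calc ‖R x - R y‖ ≤ ‖s • (P x - P y)‖ + ‖(s - t) • P y‖ := by
          rw [hsub]; exact norm_add_le _ _
      _ = s * ‖P (x - y)‖ + |s - t| * ‖P y‖ := by
          rw [norm_smul, norm_smul, hPsub, Real.norm_eq_abs, Real.norm_eq_abs,
            abs_of_nonneg hs0]
      _ ≤ 1 * ‖P (x - y)‖ + (‖x - y - P (x - y)‖ + ‖P (x - y)‖) := by
          refine add_le_add (mul_le_mul_of_nonneg_right hs1 (norm_nonneg _)) ?_
          linarith [hkey, h1, h2]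
      _ ≤ 2 * ‖x - y‖ := by
          have hPle : ‖P (x - y)‖ ≤ ‖x - y‖ := by
            have := norm_nonneg (x - y - P (x - y)); linarith
          linarith
  · -- range condition
    intro x n hn
    rw [hR x]
    have : ((max (1 - ‖x - P x‖ / ‖P x‖) 0 • P x : lp (fun _ : ℕ => ℝ) 1) : ∀ _ : ℕ, ℝ) n
        = max (1 - ‖x - P x‖ / ‖P x‖) 0 * P x n := by
      rw [lp.coeFn_smul]; rfl
    rw [this, hP, if_neg hn, mul_zero]
  · -- retraction
    intro x hx
    have hPx : P x = x := by
      apply lp.ext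
      funext n
      rw [hP]
      split
      · rfl
      · exact (hx n ‹_›).symm
    rw [hR x, hPx, sub_self, norm_zero, zero_div, sub_zero, max_eq_left zero_le_one, one_smul]
  · -- vanishing
    intro x hx
    rcases eq_or_lt_of_le (norm_nonneg (P x)) with h0 | h0
    · have : P x = 0 := by rw [← norm_eq_zero, ← h0]
      rw [hR x, this, smul_zero]
    · have : 1 - ‖x - P x‖ / ‖P x‖ ≤ 0 := by
        have : (1:ℝ) ≤ ‖x - P x‖ / ‖P x‖ := (one_le_div h0).2 hx
        linarith
      rw [hR x, max_eq_right this, zero_smul]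
end

section
/- Let M be a metric space with base point 0 and let {S_i} be a family of subsets satisfying the well-separation condition d(x,0)+d(y,0) ≤ λ·d(x,y) for x, y in different sets, with 0 ∉ S_i for all i. Set r_i = d(S_i,0)/(2λ) and U_i = {x ∈ M : d(x,S_i) ≤ r_i}. Then the sets U_i are pairwise disjoint and 0 ∉ U_i for every i. -/
/-- If the sets `S_i` are well-separated with constant `λ` relative to the base
point `z` and do not come close to `z`, then the neighborhoods
`U_i = {x : d(x,S_i) ≤ d(S_i,z)/(2λ)}` are pairwise disjoint and avoid `z`. -/
theorem separated_neighborhoods_disjoint {M : Type*} [MetricSpace M] (z : M)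
    {ι : Type*} (S : ι → Set M)
    (hne : ∀ i, (S i).Nonempty) (hcl : ∀ i, IsClosed (S i))
    (hpos : ∀ i, 0 < Metric.infDist z (S i))
    (l : ℝ) (hl : 1 ≤ l)
    (hsep : ∀ i j, i ≠ j → ∀ x ∈ S i, ∀ y ∈ S j, dist x z + dist y z ≤ l * dist x y) :
    (Pairwise fun i j =>
      Disjoint {x : M | Metric.infDist x (S i) ≤ Metric.infDist z (S i) / (2 * l)}
               {x : M | Metric.infDist x (S j) ≤ Metric.infDist z (S j) / (2 * l)}) ∧
    (∀ i, z ∉ {x : M | Metric.infDist x (S i) ≤ Metric.infDist z (S i) / (2 * l)}) := by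
  have hl0 : 0 < l := lt_of_lt_of_le one_pos hl
  constructor
  · intro i j hij
    rw [Set.disjoint_left]
    intro x hxi hxj
    simp only [Set.mem_setOf_eq] at hxi hxj
    set ri := Metric.infDist z (S i)
    set rj := Metric.infDist z (S j)
    have key : ∀ ε : ℝ, 0 < ε → ri + rj ≤ (ri + rj) / 2 + 2 * l * ε := by
      intro ε hε
      have hi' : Metric.infDist x (S i) < ri / (2 * l) + ε := by linarith
      have hj' : Metric.infDist x (S j) < rj / (2 * l) + ε := by linarith
      obtain ⟨s, hs, hds⟩ := (Metric.infDist_lt_iff (hne i)).mp hi'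
      obtain ⟨t, ht, hdt⟩ := (Metric.infDist_lt_iff (hne j)).mp hj'
      have h1 : ri ≤ dist s z := by rw [dist_comm]; exact Metric.infDist_le_dist_of_mem hs
      have h2 : rj ≤ dist t z := by rw [dist_comm]; exact Metric.infDist_le_dist_of_mem ht
      have h3 := hsep i j hij s hs t ht
      have h4 : dist s t ≤ dist x s + dist x t := by
        have := dist_triangle s x t
        rw [dist_comm s x] at this
        linarith
      have h5 : l * dist s t ≤ l * (dist x s + dist x t) :=
        mul_le_mul_of_nonneg_left h4 hl0.le
      have h6 : l * (dist x s + dist x t) ≤ l * (ri / (2 * l) + ε + (rj / (2 * l) + ε)) := by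
        apply mul_le_mul_of_nonneg_left _ hl0.le
        linarith
      have h7 : l * (ri / (2 * l) + ε + (rj / (2 * l) + ε)) = (ri + rj) / 2 + 2 * l * ε := by
        field_simp; ring
      linarith
    have hsum : 0 < ri + rj := add_pos (hpos i) (hpos j)
    have hε : 0 < (ri + rj) / (8 * l) := by positivity
    have hk := key _ hε
    have h2lε : 2 * l * ((ri + rj) / (8 * l)) = (ri + rj) / 4 := by
      field_simp; ring
    linarith
  · intro i hz
    simp only [Set.mem_setOf_eq] at hz
    have h := hpos i
    have : Metric.infDist z (S i) / (2 * l) < Metric.infDist z (S i) := by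
      rw [div_lt_iff₀ (by positivity)]
      nlinarith
    linarith
end

section
/- Let M be a metric space, S₁, S₂ ⊂ M with d(S₁,S₂) > 0 and S₂ bounded, base point 0 ∈ S₁. If there exist extension operators E₁ : Lip₀(S₁) → Lip₀(M) and E₂ : Lip₀(S₂∪{0}) → Lip₀(M) of norms C₁, C₂, then there exists an extension operator E : Lip₀(S₁ ∪ S₂) → Lip₀(M) of finite norm; in particular S₁ ∪ S₂ is Lipschitz extendable in M. -/
open scoped NNReal

/-- Pointwise multiplication by a fixed function, as a linear map. -/
noncomputable def mulLinMap {M : Type*} (φ : M → ℝ) : (M → ℝ) →ₗ[ℝ] (M → ℝ) where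
  toFun h := fun x => φ x * h x
  map_add' h₁ h₂ := by funext x; simp [mul_add]
  map_smul' c h := by funext x; simp [smul_eq_mul]; ring

/-- If `S₁, S₂ ⊆ M` with `d(S₁,S₂) > 0`, `S₂` bounded and base point `z ∈ S₁`,
and both `S₁` and `S₂ ∪ {z}` admit bounded linear extension operators
`Lip₀ → Lip₀(M)` (of norms `C₁`, `C₂`), then `S₁ ∪ S₂` admits a bounded linear
extension operator, i.e. `S₁ ∪ S₂` is Lipschitz extendable in `M`. Extension
operators are modelled as linear maps on all real-valued functions that satisfy
the Lipschitz bound on Lipschitz functions vanishing at `z`. -/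
theorem union_lipschitz_extendable {M : Type*} [MetricSpace M] (z : M)
    (S₁ S₂ : Set M) (hz : z ∈ S₁)
    (hd : ∃ r > (0 : ℝ), ∀ x ∈ S₁, ∀ y ∈ S₂, r ≤ dist x y)
    (hbdd : Bornology.IsBounded S₂)
    (C₁ C₂ : ℝ≥0)
    (hE₁ : ∃ E : (M → ℝ) →ₗ[ℝ] (M → ℝ),
      (∀ f : M → ℝ, ∀ x ∈ S₁, E f x = f x) ∧
      (∀ (f : M → ℝ) (K : ℝ≥0), f z = 0 → LipschitzOnWith K f S₁ →
        LipschitzWith (C₁ * K) (E f)))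
    (hE₂ : ∃ E : (M → ℝ) →ₗ[ℝ] (M → ℝ),
      (∀ f : M → ℝ, ∀ x ∈ S₂ ∪ {z}, E f x = f x) ∧
      (∀ (f : M → ℝ) (K : ℝ≥0), f z = 0 → LipschitzOnWith K f (S₂ ∪ {z}) →
        LipschitzWith (C₂ * K) (E f))) :
    ∃ C : ℝ≥0, ∃ E : (M → ℝ) →ₗ[ℝ] (M → ℝ),
      (∀ f : M → ℝ, ∀ x ∈ S₁ ∪ S₂, E f x = f x) ∧
      (∀ (f : M → ℝ) (K : ℝ≥0), f z = 0 → LipschitzOnWith K f (S₁ ∪ S₂) →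
        LipschitzWith (C * K) (E f)) := by
  obtain ⟨E₁, hE₁ext, hE₁lip⟩ := hE₁
  rcases Set.eq_empty_or_nonempty S₂ with h2e | h2ne
  · subst h2e
    refine ⟨C₁, E₁, ?_, ?_⟩
    · intro f x hx
      rw [Set.union_empty] at hx
      exact hE₁ext f x hx
    · intro f K hfz hf
      rw [Set.union_empty] at hf
      exact hE₁lip f K hfz hf
  obtain ⟨E₂, hE₂ext, hE₂lip⟩ := hE₂
  obtain ⟨r, hr, hrd⟩ := hd
  obtain ⟨R, hR⟩ := hbdd.subset_closedBall z
  have hR0 : 0 ≤ R := by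
    obtain ⟨y, hy⟩ := h2ne
    have := hR hy
    simp only [Metric.mem_closedBall] at this
    exact le_trans dist_nonneg this
  -- cutoff function
  set φ : M → ℝ := fun x => max (1 - Metric.infDist x S₂ / r) 0 with hφdef
  have hφ0 : ∀ x, 0 ≤ φ x := fun x => le_max_right _ _
  have hφ1 : ∀ x, φ x ≤ 1 := by
    intro x
    apply max_le ?_ (by norm_num)
    have : 0 ≤ Metric.infDist x S₂ / r := div_nonneg Metric.infDist_nonneg hr.le
    linarith
  have hφS₂ : ∀ x ∈ S₂, φ x = 1 := by
    intro x hx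
    simp [hφdef, Metric.infDist_zero_of_mem hx]
  have hφS₁ : ∀ x ∈ S₁, φ x = 0 := by
    intro x hx
    have hri : r ≤ Metric.infDist x S₂ := by
      by_contra hcon
      push_neg at hcon
      obtain ⟨y, hy, hyd⟩ := (Metric.infDist_lt_iff h2ne).1 hcon
      exact absurd (hrd x hx y hy) (not_le.2 hyd)
    have : 1 - Metric.infDist x S₂ / r ≤ 0 := by
      rw [sub_nonpos, le_div_iff₀ hr, one_mul]; exact hri
    simp [hφdef, max_eq_right this]
  have hφlip : ∀ x y : M, |φ x - φ y| ≤ dist x y / r := by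
    intro x y
    have h1 : |φ x - φ y| ≤ |(1 - Metric.infDist x S₂ / r) - (1 - Metric.infDist y S₂ / r)| :=
      abs_max_sub_max_le_abs _ _ 0
    have h2 : (1 - Metric.infDist x S₂ / r) - (1 - Metric.infDist y S₂ / r)
        = (Metric.infDist y S₂ - Metric.infDist x S₂) / r := by ring
    rw [h2, abs_div, abs_of_pos hr] at h1
    refine h1.trans (div_le_div_of_nonneg_right ?_ hr.le)
    rw [abs_sub_comm]
    exact abs_sub_le_iff.2 ⟨by
      have := Metric.infDist_le_infDist_add_dist (x := x) (y := y) (s := S₂); linarith, by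
      have := Metric.infDist_le_infDist_add_dist (x := y) (y := x) (s := S₂)
      rw [dist_comm] at this; linarith⟩
  have hφnear : ∀ x : M, 0 < φ x → dist x z ≤ r + R := by
    intro x hx
    have hlt : Metric.infDist x S₂ < r := by
      by_contra h
      push_neg at h
      have : 1 - Metric.infDist x S₂ / r ≤ 0 := by
        rw [sub_nonpos, le_div_iff₀ hr, one_mul]; exact h
      simp [hφdef, max_eq_right this] at hx
    obtain ⟨y, hy, hyd⟩ := (Metric.infDist_lt_iff h2ne).1 hlt
    have hyz : dist y z ≤ R := by have := hR hy; simpa [Metric.mem_closedBall] using this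
    calc dist x z ≤ dist x y + dist y z := dist_triangle _ _ _
      _ ≤ r + R := add_le_add hyd.le hyz
  -- the operator
  set G : (M → ℝ) →ₗ[ℝ] (M → ℝ) := E₂ ∘ₗ (LinearMap.id - E₁) with hGdef
  set E : (M → ℝ) →ₗ[ℝ] (M → ℝ) := E₁ + (mulLinMap φ) ∘ₗ G with hEdef
  have hEapp : ∀ (f : M → ℝ) (x : M), E f x = E₁ f x + φ x * (E₂ (f - E₁ f)) x := by
    intro f x
    simp [hEdef, hGdef, mulLinMap]
  set ρ : ℝ≥0 := Real.toNNReal ((r + R) / r) with hρdef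
  have hρcoe : (ρ : ℝ) = (r + R) / r :=
    Real.coe_toNNReal _ (div_nonneg (by linarith) hr.le)
  refine ⟨C₁ + C₂ * (1 + C₁) * (1 + ρ), E, ?_, ?_⟩
  · intro f x hx
    rcases hx with hx | hx
    · rw [hEapp, hφS₁ x hx, hE₁ext f x hx]; ring
    · rw [hEapp, hφS₂ x hx, hE₂ext (f - E₁ f) x (Or.inl hx)]
      simp
  · intro f K hfz hf
    -- g = f - E₁ f
    have hE₁fz : E₁ f z = f z := hE₁ext f z hz
    have hgz : (f - E₁ f) z = 0 := by simp [hE₁fz, hfz]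
    have hf₁ : LipschitzOnWith K f S₁ := hf.mono Set.subset_union_left
    have hlip₁ : LipschitzWith (C₁ * K) (E₁ f) := hE₁lip f K hfz hf₁
    have hsub : S₂ ∪ {z} ⊆ S₁ ∪ S₂ := by
      rintro x (hx | hx)
      · exact Or.inr hx
      · rw [Set.mem_singleton_iff] at hx; exact Or.inl (hx ▸ hz)
    have hglip : LipschitzOnWith (K + C₁ * K) (f - E₁ f) (S₂ ∪ {z}) := by
      have := (hf.mono hsub).sub (hlip₁.lipschitzOnWith (s := S₂ ∪ {z}))
      exact this
    set L : ℝ≥0 := C₂ * (K + C₁ * K) with hLdef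
    have hhlip : LipschitzWith L (E₂ (f - E₁ f)) := hE₂lip (f - E₁ f) (K + C₁ * K) hgz hglip
    set h := E₂ (f - E₁ f) with hhdef
    have hhz : h z = 0 := by
      rw [hhdef, hE₂ext (f - E₁ f) z (Or.inr rfl)]; exact hgz
    have hhbd : ∀ x : M, 0 < φ x → |h x| ≤ (L : ℝ) * (r + R) := by
      intro x hx
      have := hhlip.dist_le_mul x z
      rw [Real.dist_eq, hhz, sub_zero] at this
      exact this.trans (by
        have := hφnear x hx
        have hL : (0:ℝ) ≤ L := L.coe_nonneg
        nlinarith)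
    -- the product φ * h is Lipschitz
    have key : ∀ x y : M, 0 < φ y →
        |φ x * h x - φ y * h y| ≤ (L : ℝ) * (1 + (r + R) / r) * dist x y := by
      intro x y hy
      have hdec : φ x * h x - φ y * h y = φ x * (h x - h y) + h y * (φ x - φ y) := by ring
      have h1 : |φ x * (h x - h y)| ≤ (L : ℝ) * dist x y := by
        rw [abs_mul, abs_of_nonneg (hφ0 x)]
        calc φ x * |h x - h y| ≤ 1 * |h x - h y| :=
              mul_le_mul_of_nonneg_right (hφ1 x) (abs_nonneg _)
          _ = |h x - h y| := one_mul _
          _ ≤ (L : ℝ) * dist x y := by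
              have := hhlip.dist_le_mul x y; rwa [Real.dist_eq] at this
      have h2 : |h y * (φ x - φ y)| ≤ (L : ℝ) * (r + R) * (dist x y / r) := by
        rw [abs_mul]
        exact mul_le_mul (hhbd y hy) (hφlip x y) (abs_nonneg _)
          (by positivity)
      calc |φ x * h x - φ y * h y| ≤ |φ x * (h x - h y)| + |h y * (φ x - φ y)| := by
            rw [hdec]; exact abs_add_le _ _
        _ ≤ (L : ℝ) * dist x y + (L : ℝ) * (r + R) * (dist x y / r) := add_le_add h1 h2
        _ = (L : ℝ) * (1 + (r + R) / r) * dist x y := by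
            field_simp
    have hprod : ∀ x y : M,
        |φ x * h x - φ y * h y| ≤ (L : ℝ) * (1 + (r + R) / r) * dist x y := by
      intro x y
      rcases lt_or_eq_of_le (hφ0 y) with hy | hy
      · exact key x y hy
      rcases lt_or_eq_of_le (hφ0 x) with hx | hx
      · rw [abs_sub_comm, dist_comm]; exact key y x hx
      · rw [← hx, ← hy]
        simp only [zero_mul, sub_zero, abs_zero]
        positivity
    have hCeq : ((C₂ * (1 + C₁) * (1 + ρ) * K : ℝ≥0) : ℝ) = (L : ℝ) * (1 + (r + R) / r) := by
      rw [hLdef]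
      push_cast [hρcoe]
      ring
    have hprodLip : LipschitzWith (C₂ * (1 + C₁) * (1 + ρ) * K) (fun x => φ x * h x) := by
      apply LipschitzWith.of_dist_le_mul
      intro x y
      rw [Real.dist_eq, hCeq]
      exact hprod x y
    have : LipschitzWith (C₁ * K + C₂ * (1 + C₁) * (1 + ρ) * K)
        (fun x => E₁ f x + φ x * h x) := hlip₁.add hprodLip
    have hconst : (C₁ + C₂ * (1 + C₁) * (1 + ρ)) * K
        = C₁ * K + C₂ * (1 + C₁) * (1 + ρ) * K := add_mul _ _ _
    rw [hconst]
    have hfun : E f = fun x => E₁ f x + φ x * h x := funext fun x => hEapp f x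
    rw [hfun]
    exact this
end

section
/- Let X be a normed space, let E_n ⊂ X be subspaces, and choose x_n ∈ E_n with ‖x_n‖ = 2^{-N_n} where N_n ≥ N_{n-1} + 2 is strictly increasing in ℕ. Let S_n = x_n + 2^{-(N_n+1)}·B_{E_n}. Then diam(S_n) = 2·2^{-(N_n+1)}, d(S_n, 0) = 2^{-(N_n+1)}, and for n < m, every x ∈ S_n, y ∈ S_m satisfy ‖x‖ + ‖y‖ ≤ 24·‖x - y‖. -/
/-- Let `E_n ⊆ X` be subspaces, `x_n ∈ E_n` with `‖x_n‖ = 2^{-N_n}` where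
`N_{n+1} ≥ N_n + 2`, and `S_n = x_n + 2^{-(N_n+1)}·B_{E_n}`. Then
`diam(S_n) = 2·2^{-(N_n+1)}`, `d(S_n,0) = 2^{-(N_n+1)}`, and for `n < m`, any
`x ∈ S_n`, `y ∈ S_m` satisfy `‖x‖ + ‖y‖ ≤ 24·‖x - y‖`. -/
theorem small_balls_in_subspaces {X : Type*} [NormedAddCommGroup X]
    [NormedSpace ℝ X]
    (E : ℕ → Submodule ℝ X) (x : ℕ → X) (N : ℕ → ℕ)
    (hmem : ∀ n, x n ∈ E n)
    (hN : ∀ n, N n + 2 ≤ N (n + 1))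
    (hnorm : ∀ n, ‖x n‖ = (2 : ℝ) ^ (-(N n : ℤ))) :
    let S : ℕ → Set X := fun n =>
      {y : X | y ∈ E n ∧ ‖y - x n‖ ≤ (2 : ℝ) ^ (-(N n : ℤ) - 1)}
    (∀ n, Metric.diam (S n) = 2 * (2 : ℝ) ^ (-(N n : ℤ) - 1)) ∧
    (∀ n, Metric.infDist (0 : X) (S n) = (2 : ℝ) ^ (-(N n : ℤ) - 1)) ∧
    (∀ n m, n < m → ∀ a ∈ S n, ∀ b ∈ S m, ‖a‖ + ‖b‖ ≤ 24 * ‖a - b‖) := by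
  intro S
  set r : ℕ → ℝ := fun n => (2 : ℝ) ^ (-(N n : ℤ) - 1) with hr
  have hrpos : ∀ n, 0 < r n := fun n => zpow_pos (by norm_num) _
  have hx2r : ∀ n, ‖x n‖ = 2 * r n := by
    intro n
    rw [hnorm n, hr]
    have : (2 : ℝ) ^ (-(N n : ℤ)) = 2 ^ (-(N n : ℤ) - 1) * 2 := by
      rw [← zpow_add_one₀ (two_ne_zero)]; ring_nf
    rw [this]; ring
  -- the two extremal points
  have hpmem : ∀ n, ((3 / 2 : ℝ) • x n) ∈ S n := by
    intro n
    refine ⟨Submodule.smul_mem _ _ (hmem n), ?_⟩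
    have h : (3 / 2 : ℝ) • x n - x n = (1 / 2 : ℝ) • x n := by module
    rw [h, norm_smul, hx2r n, Real.norm_eq_abs,
      show |(1/2 : ℝ)| * (2 * r n) = r n by rw [abs_of_pos (by norm_num)]; ring]
  have hqmem : ∀ n, ((1 / 2 : ℝ) • x n) ∈ S n := by
    intro n
    refine ⟨Submodule.smul_mem _ _ (hmem n), ?_⟩
    have h : (1 / 2 : ℝ) • x n - x n = (-(1 / 2) : ℝ) • x n := by module
    rw [h, norm_smul, hx2r n, Real.norm_eq_abs,
      show |(-(1/2) : ℝ)| * (2 * r n) = r n by rw [abs_of_neg (by norm_num)]; ring]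
  have hdistpq : ∀ n, dist ((3 / 2 : ℝ) • x n) ((1 / 2 : ℝ) • x n) = 2 * r n := by
    intro n
    rw [dist_eq_norm, ← sub_smul]
    norm_num [hx2r n]
  have hlow : ∀ n, ∀ y ∈ S n, r n ≤ ‖y‖ := by
    intro n y hy
    have h1 : ‖x n‖ - ‖y - x n‖ ≤ ‖y‖ := by
      have h := norm_sub_norm_le (x n) (x n - y)
      rw [sub_sub_cancel, norm_sub_rev] at h
      linarith
    have h2 : ‖y - x n‖ ≤ r n := hy.2
    have := hx2r n
    linarith
  have hup : ∀ n, ∀ y ∈ S n, ‖y‖ ≤ 3 * r n := by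
    intro n y hy
    have h1 : ‖y‖ ≤ ‖y - x n‖ + ‖x n‖ := by
      simpa using norm_add_le (y - x n) (x n)
    have := hx2r n
    have h2 : ‖y - x n‖ ≤ r n := hy.2
    linarith
  have hNmono : ∀ n m, n < m → N n + 2 ≤ N m := by
    intro n m hnm
    induction m with
    | zero => omega
    | succ k ih =>
      rcases Nat.lt_succ_iff_lt_or_eq.mp hnm with h | h
      · have := hN k; have := ih h; omega
      · subst h; exact hN n
  refine ⟨?_, ?_, ?_⟩
  · -- diameter
    intro n
    apply le_antisymm
    · apply Metric.diam_le_of_forall_dist_le (by positivity)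
      intro y hy z hz
      calc dist y z ≤ dist y (x n) + dist (x n) z := dist_triangle _ _ _
        _ ≤ r n + r n := by
            rw [dist_eq_norm, dist_eq_norm, norm_sub_rev (x n) z]
            exact add_le_add hy.2 hz.2
        _ = 2 * (2 : ℝ) ^ (-(N n : ℤ) - 1) := by rw [hr]; ring
    · have hb : Bornology.IsBounded (S n) := by
        apply (Metric.isBounded_closedBall (x := x n) (r := r n)).subset
        intro y hy
        simpa [Metric.mem_closedBall, dist_eq_norm] using hy.2
      have := Metric.dist_le_diam_of_mem hb (hpmem n) (hqmem n)
      rw [hdistpq n] at this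
      simpa [hr] using this
  · -- infDist
    intro n
    apply le_antisymm
    · have := Metric.infDist_le_dist_of_mem (x := (0 : X)) (hqmem n)
      rw [dist_zero_left, norm_smul, hx2r n] at this
      calc Metric.infDist (0 : X) (S n) ≤ ‖(1 / 2 : ℝ)‖ * (2 * r n) := this
        _ = r n := by rw [Real.norm_eq_abs, abs_of_pos (by norm_num : (0:ℝ) < 1/2)]; ring
    · by_contra hcon
      push_neg at hcon
      obtain ⟨y, hy, hdy⟩ := (Metric.infDist_lt_iff ⟨_, hqmem n⟩).mp hcon
      rw [dist_zero_left] at hdy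
      exact absurd (hlow n y hy) (not_le.mpr hdy)
  · -- separation
    intro n m hnm a ha b hb
    have hNnm : N n + 2 ≤ N m := hNmono n m hnm
    have hrm : r m ≤ r n / 4 := by
      have h1 : (-(N m : ℤ) - 1) ≤ (-(N n : ℤ) - 1) - 2 := by
        have : (N n : ℤ) + 2 ≤ N m := by exact_mod_cast hNnm
        linarith
      have h2 : (2 : ℝ) ^ (-(N m : ℤ) - 1) ≤ 2 ^ ((-(N n : ℤ) - 1) - 2) :=
        zpow_le_zpow_right₀ (by norm_num) h1
      have h3 : (2 : ℝ) ^ ((-(N n : ℤ) - 1) - 2) = r n / 4 := by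
        rw [hr, zpow_sub₀ (two_ne_zero)]; norm_num
      rw [hr]; linarith [h2, h3 ▸ h2]
    have ha_lo := hlow n a ha
    have ha_up := hup n a ha
    have hb_lo := hlow m b hb
    have hb_up := hup m b hb
    have hab : r n - 3 * r m ≤ ‖a - b‖ := by
      have := norm_sub_norm_le a b
      linarith [abs_le.mp (abs_norm_sub_norm_le a b)]
    linarith [hrpos n, hrpos m]
end
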